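/- arXiv:1108.4766 — 2 statements merged into one kernel-verified Lean document; each statement's English description precedes it below -/
import Mathlib

section
/- Let k ≥ 3 be an odd integer and d ≥ 1 an integer. For every nonzero real number z, f^{k,k}_{2d−1}(z) · z^((k−3)/2 − k) / (2d−1)^((k−3)/2) = (2·(k(2d−1))‼ / ((2d−1)‼)^k) · z^(−1). Equivalently, the residue at z = 0 of z^(−k)·f^{k,k}_{2d−1}(z)·z^((k−3)/2)/(2d−1)^((k−3)/2) equals the d-th coefficient 2·(k(2d−1))‼/((2d−1)‼)^k of the series τ_k. -/
/-!
Both products in `f^{k,k}_{2d-1}` are descending products of odd numbers times the constant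
`z / (2d-1)`, so the numerator is `(k(2d-1))‼ (z/(2d-1))^n` with `2n - 1 = k(2d-1)` and the
denominator is `((2d-3)‼ (z/(2d-1))^(d-1))^k`. Since `n - k(d-1) = (k+1)/2`, the block is a single
monomial in `z`; multiplying by `z^((k-3)/2 - k) / (2d-1)^((k-3)/2)` leaves `z⁻¹`, and the powers of
`2d-1` recombine with `(2d-3)‼^k` into `(2d-1)‼^k`.
-/

open Nat Finset

theorem prod_range_two_mul_sub_one_sub_mul {R : Type*} [CommRing R] (n : ℕ) (w : R) :
    ∏ j ∈ range n, ((2 * (n : R) - 1 - 2 * j) * w) = ((2 * n - 1)‼ : ℕ) * w ^ n := by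
  rw [prod_mul_distrib, prod_const, card_range]
  congr 1
  induction n with
  | zero => simp
  | succ n ih =>
    rw [prod_range_succ', show 2 * (n + 1) - 1 = 2 * n + 1 by omega, doubleFactorial_add_one,
      Nat.cast_mul, ← ih]
    push_cast
    ring_nf

theorem doubleFactorial_two_mul_sub_one {d : ℕ} (hd : 1 ≤ d) :
    (2 * d - 1)‼ = (2 * d - 1) * (2 * (d - 1) - 1)‼ := by
  obtain ⟨m, rfl⟩ := Nat.exists_eq_add_of_le' hd
  simpa [Nat.mul_add, show 2 * m + 2 - 1 = 2 * m + 1 by omega] using doubleFactorial_add_one (2 * m)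

theorem odd_mul_two_mul_sub_one_add_one {k d : ℕ} (hk : Odd k) (hd : 1 ≤ d) :
    k * (2 * d - 1) + 1 = 2 * (k * d - (k + 1) / 2 + 1) := by
  obtain ⟨s, rfl⟩ := hk
  obtain ⟨m, rfl⟩ := Nat.exists_eq_add_of_le' hd
  have h1 : (2 * s + 1) * (m + 1) = 2 * (s * m) + m + s + (s + 1) := by ring
  have h2 : (2 * s + 1) * (2 * (m + 1) - 1) = 4 * (s * m) + 2 * s + 2 * m + 1 := by
    rw [show 2 * (m + 1) - 1 = 2 * m + 1 by omega]; ring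
  omega

section BuildingBlock

variable {K : Type*} [Field K]

/-- The paper's `f^{k,k}_{2d-1}(z)`: its `j`-th factor `(j(-z) + (k(2d-1) - j) z)/(2d-1)` is
`(k(2d-1) - 2j) z / (2d-1)`. -/
def buildingBlock (k d : ℕ) (z : K) : K :=
  (2 / (2 * (d : K) - 1)) *
    (∏ j ∈ Finset.range (k * d - (k + 1) / 2 + 1),
      ((k : K) * (2 * (d : K) - 1) - 2 * (j : K)) * z / (2 * (d : K) - 1)) /
    (∏ j ∈ Finset.Icc 1 (d - 1),
      ((2 * (d : K) - 1 - 2 * (j : K)) * z / (2 * (d : K) - 1)) ^ k)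

theorem two_mul_natCast_sub_one_ne_zero [CharZero K] (d : ℕ) : 2 * (d : K) - 1 ≠ 0 := by
  have : ((2 * d - 1 : ℤ) : K) ≠ 0 := Int.cast_ne_zero.mpr (by omega)
  exact_mod_cast this

theorem buildingBlock_numerator_eq {k d : ℕ} (hk : Odd k) (hd : 1 ≤ d) (z : K) :
    ∏ j ∈ range (k * d - (k + 1) / 2 + 1), ((k : K) * (2 * d - 1) - 2 * j) * z / (2 * d - 1)
      = ((k * (2 * d - 1))‼ : ℕ) * (z / (2 * d - 1)) ^ (k * d - (k + 1) / 2 + 1) := by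
  have hn := odd_mul_two_mul_sub_one_add_one hk hd
  have hcast : (k : K) * (2 * d - 1) = 2 * ((k * d - (k + 1) / 2 + 1 : ℕ) : K) - 1 := by
    have := congrArg (Nat.cast : ℕ → K) hn
    push_cast [Nat.cast_sub (by omega : 1 ≤ 2 * d)] at this
    push_cast
    linear_combination this
  simp_rw [hcast, mul_div_assoc]
  rw [prod_range_two_mul_sub_one_sub_mul,
    show 2 * (k * d - (k + 1) / 2 + 1) - 1 = k * (2 * d - 1) by omega]

theorem buildingBlock_denominator_eq {d : ℕ} (hd : 1 ≤ d) (k : ℕ) (z : K) :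
    ∏ j ∈ Icc 1 (d - 1), ((2 * d - 1 - 2 * j : K) * z / (2 * d - 1)) ^ k
      = (((2 * (d - 1) - 1)‼ : ℕ) * (z / (2 * d - 1)) ^ (d - 1)) ^ k := by
  obtain ⟨m, rfl⟩ := Nat.exists_eq_add_of_le' hd
  rw [prod_pow, ← prod_range_two_mul_sub_one_sub_mul, Nat.add_sub_cancel,
    ← Ico_add_one_right_eq_Icc, prod_Ico_eq_prod_range, Nat.add_sub_cancel]
  congr 1
  refine prod_congr rfl fun j _ => ?_
  push_cast
  ring

theorem buildingBlock_eq [CharZero K] {k d : ℕ} (hk : Odd k) (hd : 1 ≤ d) {z : K} (hz : z ≠ 0) :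
    buildingBlock k d z
      = 2 / (2 * d - 1) * ((k * (2 * d - 1))‼ : ℕ) / (((2 * (d - 1) - 1)‼ : ℕ) : K) ^ k
        * (z / (2 * d - 1)) ^ ((k + 1) / 2) := by
  have hexp : k * d - (k + 1) / 2 + 1 = (d - 1) * k + (k + 1) / 2 := by
    obtain ⟨m, rfl⟩ := Nat.exists_eq_add_of_le' hd
    obtain ⟨s, rfl⟩ := hk
    rw [Nat.add_sub_cancel, mul_add_one, mul_comm]
    omega
  have hD := two_mul_natCast_sub_one_ne_zero (K := K) d
  have hB : (((2 * (d - 1) - 1)‼ : ℕ) : K) ≠ 0 := by exact_mod_cast (doubleFactorial_pos _).ne'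
  rw [buildingBlock, buildingBlock_numerator_eq hk hd, buildingBlock_denominator_eq hd, hexp,
    mul_pow, ← pow_mul, pow_add]
  field_simp

end BuildingBlock

theorem stmt_5 (k d : ℕ) (hk : 3 ≤ k) (hkodd : Odd k) (hd : 1 ≤ d)
    (z : ℝ) (hz : z ≠ 0) :
    ((2 / (2 * (d : ℝ) - 1)) *
      (∏ j ∈ Finset.range (k * d - (k + 1) / 2 + 1),
        ((k : ℝ) * (2 * (d : ℝ) - 1) - 2 * (j : ℝ)) * z / (2 * (d : ℝ) - 1)) /
      (∏ j ∈ Finset.Icc 1 (d - 1),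
        ((2 * (d : ℝ) - 1 - 2 * (j : ℝ)) * z / (2 * (d : ℝ) - 1)) ^ k)) *
      z ^ (((k : ℤ) - 3) / 2 - (k : ℤ)) / (2 * (d : ℝ) - 1) ^ ((k - 3) / 2)
    = (2 * ((k * (2 * d - 1))‼ : ℝ) / (((2 * d - 1)‼ : ℝ)) ^ k) * z ^ (-1 : ℤ) := by
  change buildingBlock k d z * _ / _ = _
  rw [buildingBlock_eq hkodd hd hz, doubleFactorial_two_mul_sub_one hd]
  obtain ⟨r, rfl⟩ : ∃ r, k = 2 * r + 3 := ⟨(k - 3) / 2, by obtain ⟨s, hs⟩ := hkodd; omega⟩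
  rw [show (2 * r + 3 + 1) / 2 = r + 2 by omega, show (2 * r + 3 - 3) / 2 = r by omega,
    show (((2 * r + 3 : ℕ) : ℤ) - 3) / 2 - ((2 * r + 3 : ℕ) : ℤ) = -((r + 3 : ℕ) : ℤ) by omega,
    zpow_neg, zpow_natCast, zpow_neg_one, Nat.cast_mul, Nat.cast_sub (by omega : 1 ≤ 2 * d)]
  have hD := two_mul_natCast_sub_one_ne_zero (K := ℝ) d
  have hB : (((2 * (d - 1) - 1)‼ : ℕ) : ℝ) ≠ 0 := by exact_mod_cast (doubleFactorial_pos _).ne'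
  rw [div_pow, mul_pow]
  push_cast
  field_simp
  ring
end

section
/- Let k ≥ 3 be an odd integer. Let T ∈ ℚ⟦q⟧ be the formal power series whose coefficient of q^(2d−1) is 2·(k(2d−1))‼/((2d−1)‼)^k for every integer d ≥ 1 and whose other coefficients are 0. Let θ : ℚ⟦q⟧ → ℚ⟦q⟧ be the operator θ(F) := q·(dF/dq). Then (1/2)^(k−1)·θ^(k−1)(T) − k·q²·((k/2)·θ + (k−1))∘((k/2)·θ + (k−2))∘···∘((k/2)·θ + 1)(T) = (k‼/2^(k−2))·q, where for a scalar c the operator (k/2)·θ + c sends F to (k/2)·θ(F) + c·F, and n‼ denotes the double factorial. -/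
/-!
Since `θ` multiplies the coefficient of `q ^ n` by `n`, the coefficient of `q ^ (m + 2)` on the
left is `((m + 2) / 2) ^ (k - 1) t (m + 2) - k ∏_{j < k - 1} (k m / 2 + j + 1) t m`, where
`t n` is the coefficient of `q ^ n` in `T`. For even `m` both `t`'s vanish; for odd `m` the
difference is zero by the recurrence `(k (m + 2))‼ = (k m + 2) ⋯ (k m + 2 k) · (k m)‼`. What
remains is the coefficient of `q`, namely `(1 / 2) ^ (k - 1) t 1 = k‼ / 2 ^ (k - 2)`.
-/

open Nat PowerSeries Finset

/-- The operator `θ = q·d/dq` on formal power series. -/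
noncomputable def theta (F : PowerSeries ℚ) : PowerSeries ℚ :=
  PowerSeries.X * PowerSeries.derivative ℚ F

/-- The iterated application `((k/2)·θ + n) ∘ ⋯ ∘ ((k/2)·θ + 1)` applied to `T`. -/
noncomputable def opChain (k : ℕ) (T : PowerSeries ℚ) : ℕ → PowerSeries ℚ
  | 0 => T
  | n + 1 => ((k : ℚ) / 2) • theta (opChain k T n) + ((n : ℚ) + 1) • opChain k T n

lemma coeff_theta (F : ℚ⟦X⟧) (n : ℕ) : coeff n (theta F) = n * coeff n F := by
  cases n with
  | zero => simp [theta]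
  | succ m =>
    rw [theta, coeff_succ_X_mul, coeff_derivative]
    push_cast
    ring

lemma coeff_iterate_theta (F : ℚ⟦X⟧) (m n : ℕ) :
    coeff n (theta^[m] F) = (n : ℚ) ^ m * coeff n F := by
  induction m with
  | zero => simp
  | succ m ih =>
    rw [Function.iterate_succ_apply', coeff_theta, ih]
    ring

lemma coeff_opChain (k : ℕ) (T : ℚ⟦X⟧) (m n : ℕ) :
    coeff n (opChain k T m) = (∏ j ∈ range m, ((k : ℚ) * n / 2 + (j + 1))) * coeff n T := by
  induction m with
  | zero => simp [opChain]
  | succ m ih =>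
    rw [opChain, map_add, map_smul, map_smul, coeff_theta, ih, prod_range_succ, smul_eq_mul,
      smul_eq_mul]
    ring

lemma doubleFactorial_add_two_mul (m j : ℕ) :
    (m + 2 * j)‼ = (∏ i ∈ range j, (m + 2 * (i + 1))) * m‼ := by
  induction j with
  | zero => simp
  | succ j ih =>
    rw [prod_range_succ, show m + 2 * (j + 1) = m + 2 * j + 2 by ring, doubleFactorial_add_two, ih]
    ring

/-- The coefficient of `q ^ a` in the paper's series `τ_k`, for odd `a`. -/
noncomputable def tauCoeff (k a : ℕ) : ℚ := 2 * ((k * a)‼ : ℚ) / (a‼ : ℚ) ^ k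

/-- In `(k (a + 2))‼ = (k a + 2) ⋯ (k a + 2k) · (k a)‼` the last factor `k (a + 2)` cancels
against the powers of `a + 2`, leaving `k` and `k - 1` linear factors. -/
lemma tauCoeff_add_two (k a : ℕ) (hk : 0 < k) :
    (((a + 2 : ℕ) : ℚ) / 2) ^ (k - 1) * tauCoeff k (a + 2)
      = k * (∏ j ∈ range (k - 1), ((k : ℚ) * a / 2 + (j + 1))) * tauCoeff k a := by
  obtain ⟨e, rfl⟩ : ∃ e, k = e + 1 := ⟨k - 1, by omega⟩
  have hnum : ((e + 1) * (a + 2))‼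
      = (∏ i ∈ range e, ((e + 1) * a + 2 * (i + 1))) * ((e + 1) * (a + 2)) * ((e + 1) * a)‼ := by
    rw [show (e + 1) * (a + 2) = (e + 1) * a + 2 * (e + 1) by ring, doubleFactorial_add_two_mul,
      prod_range_succ]
  have hprod : ∏ j ∈ range e, (((e + 1 : ℕ) : ℚ) * a / 2 + (j + 1))
      = (∏ j ∈ range e, (((e + 1) * a + 2 * (j + 1) : ℕ) : ℚ)) / 2 ^ e := by
    rw [show (2 : ℚ) ^ e = ∏ _j ∈ range e, (2 : ℚ) by simp, ← prod_div_distrib]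
    refine prod_congr rfl fun j _ => ?_
    push_cast
    ring
  have ha : ((a‼ : ℕ) : ℚ) ≠ 0 := by exact_mod_cast (doubleFactorial_pos a).ne'
  rw [tauCoeff, tauCoeff, hnum, doubleFactorial_add_two, Nat.add_sub_cancel, hprod, div_pow]
  push_cast
  rw [mul_pow (_ + 2)]
  field_simp
  ring

theorem stmt_7_general (k : ℕ) (hk : 3 ≤ k) (T : PowerSeries ℚ)
    (hT1 : ∀ d : ℕ, 1 ≤ d →
      PowerSeries.coeff (2 * d - 1) T
        = 2 * ((k * (2 * d - 1))‼ : ℚ) / (((2 * d - 1)‼ : ℚ)) ^ k)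
    (hT2 : ∀ n : ℕ, Even n → PowerSeries.coeff n T = 0) :
    ((1 : ℚ) / 2) ^ (k - 1) • (theta^[k - 1] T)
      - (k : ℚ) • (PowerSeries.X ^ 2 * opChain k T (k - 1))
    = ((k‼ : ℚ) / 2 ^ (k - 2)) • PowerSeries.X := by
  have hodd (a : ℕ) (ha : Odd a) : coeff a T = tauCoeff k a := by
    obtain ⟨c, rfl⟩ := ha
    rw [tauCoeff]
    simpa [show 2 * (c + 1) - 1 = 2 * c + 1 by omega] using hT1 (c + 1) (by omega)
  ext n
  rw [map_sub, map_smul, map_smul, map_smul, coeff_iterate_theta, coeff_X_pow_mul', coeff_X,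
    smul_eq_mul, smul_eq_mul, smul_eq_mul]
  match n with
  | 0 => simp [zero_pow (show k - 1 ≠ 0 by omega)]
  | 1 =>
    rw [hodd 1 odd_one, tauCoeff, show k - 1 = k - 2 + 1 by omega]
    simp only [if_neg (show ¬2 ≤ 1 by omega), ↓reduceIte, show (1 : ℕ)‼ = 1 from rfl, cast_one,
      one_pow, mul_one, mul_zero, sub_zero, div_pow, pow_succ]
    field_simp
  | m + 2 =>
    simp only [if_pos (show 2 ≤ m + 2 by omega), if_neg (show m + 2 ≠ 1 by omega),
      Nat.add_sub_cancel, coeff_opChain, mul_zero]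
    rcases Nat.even_or_odd m with hm | hm
    · simp [hT2 m hm, hT2 (m + 2) (hm.add even_two)]
    · rw [hodd m hm, hodd (m + 2) (hm.add_even even_two)]
      linear_combination tauCoeff_add_two k m (by omega)

theorem stmt_7 (k : ℕ) (hk : 3 ≤ k) (hkodd : Odd k) (T : PowerSeries ℚ)
    (hT1 : ∀ d : ℕ, 1 ≤ d →
      PowerSeries.coeff (2 * d - 1) T
        = 2 * ((k * (2 * d - 1))‼ : ℚ) / (((2 * d - 1)‼ : ℚ)) ^ k)
    (hT2 : ∀ n : ℕ, Even n → PowerSeries.coeff n T = 0) :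
    ((1 : ℚ) / 2) ^ (k - 1) • (theta^[k - 1] T)
      - (k : ℚ) • (PowerSeries.X ^ 2 * opChain k T (k - 1))
    = ((k‼ : ℚ) / 2 ^ (k - 2)) • PowerSeries.X :=
  stmt_7_general k hk T hT1 hT2
end
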